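/- arXiv:1402.4435 — 7 statements merged into one kernel-verified Lean document; each statement's English description precedes it below -/
import Mathlib

section
/- Assume B⁻v̇B = B⁻v̇N'(v) and v̇⁻¹B⁻v̇ ∩ N'(v) = {1}. Then the map n ↦ B⁻(v̇n) is a bijection from N_{v,w} onto the subset {B⁻g ∈ B⁻\G : g ∈ B⁻v̇B} ∩ {B⁻g ∈ B⁻\G : g ∈ B⁻ẇB⁻} of the coset space B⁻\G. (In the paper this says that x ↦ π(v̄x) induces an isomorphism from N_{v,w} onto the open Richardson stratum R_{v,w} = C^v ∩ C_w of the flag variety, and in particular R_{v,w} = π(B⁻vB ∩ B⁻wB⁻).) -/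
/-! Both target sets are images of double cosets in `B⁻ \ G`. The hypothesis
`B⁻ v̇ B = B⁻ v̇ N'(v)` identifies the first with `{B⁻ v̇ n : n ∈ N'(v)}`, on which `n ↦ B⁻ v̇ n` is
injective because `N'(v)` is a subgroup meeting `v̇⁻¹ B⁻ v̇` trivially. Since `B⁻ ẇ B⁻` is left
`B⁻`-invariant, `B⁻ v̇ n` lies in the image of `B⁻ ẇ B⁻` exactly when `v̇ n ∈ B⁻ ẇ B⁻`, which is the
condition cutting `N_{v,w}` out of `N'(v)`. -/

/-- `N(v) = N ∩ v⁻¹ N⁻ v`, i.e. the elements `x ∈ N` with `v * x * v⁻¹ ∈ N⁻`. -/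
def NvSet {G : Type*} [Group G] (N Nm : Subgroup G) (v : G) : Set G :=
  {x | x ∈ N ∧ v * x * v⁻¹ ∈ Nm}

/-- `N'(v) = N ∩ v⁻¹ N v`, i.e. the elements `x ∈ N` with `v * x * v⁻¹ ∈ N`. -/
def Nv'Set {G : Type*} [Group G] (N : Subgroup G) (v : G) : Set G :=
  {x | x ∈ N ∧ v * x * v⁻¹ ∈ N}

/-- `O_{v,w} = N ∩ v⁻¹ B⁻ N w`. -/
def OSet {G : Type*} [Group G] (N Bm : Subgroup G) (v w : G) : Set G :=
  {x | x ∈ N ∧ ∃ b ∈ Bm, ∃ n ∈ N, v * x = b * n * w}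

/-- `N_{v,w} = N'(v) ∩ v⁻¹ B⁻ w B⁻`. -/
def NvwSet {G : Type*} [Group G] (N Bm : Subgroup G) (v w : G) : Set G :=
  {x | x ∈ Nv'Set N v ∧ ∃ b₁ ∈ Bm, ∃ b₂ ∈ Bm, v * x = b₁ * w * b₂}

/-- `U_{v,w} = N ∩ B⁻ v N w⁻¹`. -/
def USet {G : Type*} [Group G] (N Bm : Subgroup G) (v w : G) : Set G :=
  {x | x ∈ N ∧ ∃ b ∈ Bm, ∃ n ∈ N, x = b * v * n * w⁻¹}

open DoubleCoset QuotientGroup Set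

section

variable {G : Type*} [Group G]

lemma mk_rightRel_mul_of_mem {H : Subgroup G} {h : G} (hh : h ∈ H) (g : G) :
    Quotient.mk (rightRel H) (h * g) = Quotient.mk (rightRel H) g :=
  Quotient.sound <| rightRel_apply.2 <| by rw [mul_inv_rev, mul_inv_cancel_left]; exact H.inv_mem hh

lemma setOf_exists_mem_doubleCoset_eq_image (H K : Subgroup G) (a : G) :
    {q | ∃ g, (∃ b₁ ∈ H, ∃ b₂ ∈ K, g = b₁ * a * b₂) ∧
      q = Quotient.mk (rightRel H) g} = Quotient.mk (rightRel H) '' doubleCoset a H K := by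
  ext q
  simp only [mem_ofPred_eq, mem_image, mem_doubleCoset, SetLike.mem_coe, eq_comm (a := q)]

lemma image_mk_doubleCoset (H : Subgroup G) (a : G) (S : Set G) :
    Quotient.mk (rightRel H) '' doubleCoset a H S
      = (fun s => Quotient.mk (rightRel H) (a * s)) '' S := by
  ext q
  constructor
  · rintro ⟨g, hg, rfl⟩
    obtain ⟨h, hh, s, hs, rfl⟩ := mem_doubleCoset.1 hg
    exact ⟨s, hs, by rw [mul_assoc, mk_rightRel_mul_of_mem hh]⟩
  · rintro ⟨s, hs, rfl⟩
    exact ⟨a * s, mem_doubleCoset.2 ⟨1, H.one_mem, s, hs, by rw [one_mul]⟩, rfl⟩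

lemma mk_mem_image_doubleCoset_iff {H K : Subgroup G} {a g : G} :
    Quotient.mk (rightRel H) g ∈ Quotient.mk (rightRel H) '' doubleCoset a H K
      ↔ g ∈ doubleCoset a H K := by
  refine ⟨?_, mem_image_of_mem _⟩
  rintro ⟨g', hg', hg'g⟩
  obtain ⟨b₁, hb₁, b₂, hb₂, rfl⟩ := mem_doubleCoset.1 hg'
  have hH : g * (b₁ * a * b₂)⁻¹ ∈ H := rightRel_apply.1 (Quotient.exact hg'g)
  exact mem_doubleCoset.2
    ⟨g * (b₁ * a * b₂)⁻¹ * b₁, H.mul_mem hH hb₁, b₂, hb₂, by group⟩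

lemma mul_inv_mem_Nv'Set {N : Subgroup G} {v x y : G} (hx : x ∈ Nv'Set N v)
    (hy : y ∈ Nv'Set N v) : x * y⁻¹ ∈ Nv'Set N v := by
  refine ⟨N.mul_mem hx.1 (N.inv_mem hy.1), ?_⟩
  have hconj : v * (x * y⁻¹) * v⁻¹ = v * x * v⁻¹ * (v * y * v⁻¹)⁻¹ := by group
  rw [hconj]
  exact N.mul_mem hx.2 (N.inv_mem hy.2)

lemma injOn_mk_mul_Nv'Set {N Bm : Subgroup G} {v : G}
    (h : ∀ x ∈ Nv'Set N v, v * x * v⁻¹ ∈ Bm → x = 1) :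
    InjOn (fun n => Quotient.mk (rightRel Bm) (v * n)) (Nv'Set N v) := by
  intro x hx y hy hxy
  have hBm : v * y * (v * x)⁻¹ ∈ Bm := rightRel_apply.1 (Quotient.exact hxy)
  have hconj : v * (y * x⁻¹) * v⁻¹ = v * y * (v * x)⁻¹ := by group
  exact (mul_inv_eq_one.1 (h _ (mul_inv_mem_Nv'Set hy hx) (hconj ▸ hBm))).symm

lemma NvwSet_eq_inter_preimage (N Bm : Subgroup G) (v w : G) :
    NvwSet N Bm v w = Nv'Set N v ∩ (fun n => Quotient.mk (rightRel Bm) (v * n)) ⁻¹'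
      (Quotient.mk (rightRel Bm) '' doubleCoset w Bm Bm) := by
  ext x
  simp only [NvwSet, mem_inter_iff, mem_preimage, mk_mem_image_doubleCoset_iff, mem_doubleCoset,
    SetLike.mem_coe, mem_ofPred_eq]

end

theorem stmt0_general {G : Type*} [Group G] (Bm B N : Subgroup G) (vdot wdot : G)
    (h1 : {x : G | ∃ b₁ ∈ Bm, ∃ b₂ ∈ B, x = b₁ * vdot * b₂}
        = {x : G | ∃ b ∈ Bm, ∃ n ∈ Nv'Set N vdot, x = b * vdot * n})
    (h2 : ∀ x ∈ Nv'Set N vdot, vdot * x * vdot⁻¹ ∈ Bm → x = 1) :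
    Set.BijOn (fun n => Quotient.mk (QuotientGroup.rightRel Bm) (vdot * n))
      (NvwSet N Bm vdot wdot)
      ({q | ∃ g, (∃ b₁ ∈ Bm, ∃ b₂ ∈ B, g = b₁ * vdot * b₂) ∧
            q = Quotient.mk (QuotientGroup.rightRel Bm) g} ∩
       {q | ∃ g, (∃ b₁ ∈ Bm, ∃ b₂ ∈ Bm, g = b₁ * wdot * b₂) ∧
            q = Quotient.mk (QuotientGroup.rightRel Bm) g}) := by
  have hv : doubleCoset vdot Bm B = doubleCoset vdot Bm (Nv'Set N vdot) := by
    ext g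
    simpa only [mem_doubleCoset, SetLike.mem_coe, mem_ofPred_eq] using Set.ext_iff.1 h1 g
  rw [setOf_exists_mem_doubleCoset_eq_image, setOf_exists_mem_doubleCoset_eq_image, hv,
    image_mk_doubleCoset, NvwSet_eq_inter_preimage, ← image_inter_preimage]
  exact ((injOn_mk_mul_Nv'Set h2).mono inter_subset_left).bijOn_image

/-- Assuming `B⁻ v̇ B = B⁻ v̇ N'(v)` and `v̇⁻¹ B⁻ v̇ ∩ N'(v) = {1}`,
the map `n ↦ B⁻ (v̇ n)` is a bijection from `N_{v,w}` onto the intersection of the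
projections of `B⁻ v̇ B` and `B⁻ ẇ B⁻` in the coset space `B⁻ \ G`. -/
theorem stmt0 {G : Type*} [Group G] (Bm B Nm N : Subgroup G)
    (hNmBm : Nm ≤ Bm) (hNB : N ≤ B) (vdot wdot : G)
    (h1 : {x : G | ∃ b₁ ∈ Bm, ∃ b₂ ∈ B, x = b₁ * vdot * b₂}
        = {x : G | ∃ b ∈ Bm, ∃ n ∈ Nv'Set N vdot, x = b * vdot * n})
    (h2 : ∀ x ∈ Nv'Set N vdot, vdot * x * vdot⁻¹ ∈ Bm → x = 1) :
    Set.BijOn (fun n => Quotient.mk (QuotientGroup.rightRel Bm) (vdot * n))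
      (NvwSet N Bm vdot wdot)
      ({q | ∃ g, (∃ b₁ ∈ Bm, ∃ b₂ ∈ B, g = b₁ * vdot * b₂) ∧
            q = Quotient.mk (QuotientGroup.rightRel Bm) g} ∩
       {q | ∃ g, (∃ b₁ ∈ Bm, ∃ b₂ ∈ Bm, g = b₁ * wdot * b₂) ∧
            q = Quotient.mk (QuotientGroup.rightRel Bm) g}) :=
  stmt0_general Bm B N vdot wdot h1 h2
end

section
/- Assume B⁻ ∩ N = {1} and v̇⁻¹B⁻v̇ ∩ N ⊆ v̇⁻¹N⁻v̇. Then ζ_{v,w} is a well-defined surjective map from O_{v,w} onto U_{v,w}, and for all x, x' ∈ O_{v,w} one has ζ_{v,w}(x) = ζ_{v,w}(x') if and only if there exists n ∈ N(v) with x' = nx. -/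
/-- `IsPlusPart Bm N z y` says `y = [z]⁺`. -/
def IsPlusPart {G : Type*} [Group G] (Bm N : Subgroup G) (z y : G) : Prop :=
  y ∈ N ∧ ∃ b ∈ Bm, z = b * y

namespace IsPlusPart

variable {G : Type*} [Group G] {Bm N : Subgroup G} {z z' y y' : G}

theorem unique (hBN : ∀ x : G, x ∈ Bm → x ∈ N → x = 1)
    (h : IsPlusPart Bm N z y) (h' : IsPlusPart Bm N z y') : y = y' := by
  obtain ⟨hy, b, hb, rfl⟩ := h
  obtain ⟨hy', b', hb', hbb'⟩ := h'
  have hBm : y * y'⁻¹ ∈ Bm := by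
    rw [show y * y'⁻¹ = b⁻¹ * b' by rw [eq_inv_mul_iff_mul_eq, ← mul_assoc, hbb']; group]
    exact mul_mem (inv_mem hb) hb'
  exact mul_inv_eq_one.mp (hBN _ hBm (mul_mem hy (inv_mem hy')))

theorem mul_left {b : G} (hb : b ∈ Bm) (h : IsPlusPart Bm N z y) :
    IsPlusPart Bm N (b * z) y := by
  obtain ⟨hy, b', hb', rfl⟩ := h
  exact ⟨hy, b * b', mul_mem hb hb', (mul_assoc _ _ _).symm⟩

theorem mul_inv_mem (h : IsPlusPart Bm N z y) (h' : IsPlusPart Bm N z' y) :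
    z' * z⁻¹ ∈ Bm := by
  obtain ⟨-, b, hb, rfl⟩ := h
  obtain ⟨-, b', hb', rfl⟩ := h'
  rw [show b' * y * (b * y)⁻¹ = b' * b⁻¹ by group]
  exact mul_mem hb' (inv_mem hb)

end IsPlusPart

section

variable {G : Type*} [Group G] {Bm N : Subgroup G} {v w x y : G}

theorem mem_USet_of_isPlusPart (hx : x ∈ N) (h : IsPlusPart Bm N (v * x * w⁻¹) y) :
    y ∈ USet N Bm v w := by
  obtain ⟨hy, b, hb, hxy⟩ := h
  exact ⟨hy, b⁻¹, inv_mem hb, x, hx, by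
    simp only [mul_assoc] at hxy ⊢; rw [hxy]; group⟩

theorem exists_mem_OSet_isPlusPart_of_mem_USet (hy : y ∈ USet N Bm v w) :
    ∃ x ∈ OSet N Bm v w, IsPlusPart Bm N (v * x * w⁻¹) y := by
  obtain ⟨hyN, b, hb, x, hx, rfl⟩ := hy
  refine ⟨x, ⟨hx, b⁻¹, inv_mem hb, _, hyN, by group⟩, hyN, b⁻¹, inv_mem hb, by group⟩

end

theorem stmt4_general {G : Type*} [Group G] (Bm Nm N : Subgroup G)
    (hNmBm : Nm ≤ Bm) (vdot wdot : G)
    (hBN : ∀ x : G, x ∈ Bm → x ∈ N → x = 1)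
    (hv : ∀ x ∈ N, vdot * x * vdot⁻¹ ∈ Bm → vdot * x * vdot⁻¹ ∈ Nm)
    (ζ : G → G)
    (hζ : ∀ x ∈ OSet N Bm vdot wdot,
      ζ x ∈ N ∧ ∃ b ∈ Bm, vdot * x * wdot⁻¹ = b * ζ x) :
    (∀ x ∈ OSet N Bm vdot wdot, ζ x ∈ USet N Bm vdot wdot) ∧
    (∀ y ∈ USet N Bm vdot wdot, ∃ x ∈ OSet N Bm vdot wdot, ζ x = y) ∧
    (∀ x ∈ OSet N Bm vdot wdot, ∀ x' ∈ OSet N Bm vdot wdot,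
      (ζ x = ζ x' ↔ ∃ n ∈ NvSet N Nm vdot, x' = n * x)) := by
  have hζ : ∀ x ∈ OSet N Bm vdot wdot, IsPlusPart Bm N (vdot * x * wdot⁻¹) (ζ x) := hζ
  refine ⟨fun x hx => mem_USet_of_isPlusPart hx.1 (hζ x hx), fun y hy => ?_,
    fun x hx x' hx' => ⟨fun h => ?_, ?_⟩⟩
  · obtain ⟨x, hx, hxy⟩ := exists_mem_OSet_isPlusPart_of_mem_USet hy
    exact ⟨x, hx, (hζ x hx).unique hBN hxy⟩
  · have hn : x' * x⁻¹ ∈ N := mul_mem hx'.1 (inv_mem hx.1)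
    refine ⟨x' * x⁻¹, ⟨hn, hv _ hn ?_⟩, by group⟩
    rw [show vdot * (x' * x⁻¹) * vdot⁻¹
      = vdot * x' * wdot⁻¹ * (vdot * x * wdot⁻¹)⁻¹ by group]
    exact (hζ x hx).mul_inv_mem (h ▸ hζ x' hx')
  · rintro ⟨n, ⟨-, hn⟩, rfl⟩
    have hnx := (hζ x hx).mul_left (hNmBm hn)
    rw [show vdot * n * vdot⁻¹ * (vdot * x * wdot⁻¹) = vdot * (n * x) * wdot⁻¹ by group]
      at hnx
    exact hnx.unique hBN (hζ _ hx')

/-- Assuming `B⁻ ∩ N = {1}` and `v̇⁻¹ B⁻ v̇ ∩ N ⊆ v̇⁻¹ N⁻ v̇`, the map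
`ζ_{v,w} : x ↦ [v̇ x ẇ⁻¹]⁺` is a well-defined surjection from `O_{v,w}` onto `U_{v,w}`,
and `ζ_{v,w}(x) = ζ_{v,w}(x')` iff `x' = n x` for some `n ∈ N(v)`. -/
theorem stmt4 {G : Type*} [Group G] (Bm B Nm N : Subgroup G)
    (hNmBm : Nm ≤ Bm) (hNB : N ≤ B) (vdot wdot : G)
    (hBN : ∀ x : G, x ∈ Bm → x ∈ N → x = 1)
    (hv : ∀ x ∈ N, vdot * x * vdot⁻¹ ∈ Bm → vdot * x * vdot⁻¹ ∈ Nm)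
    (ζ : G → G)
    (hζ : ∀ x ∈ OSet N Bm vdot wdot,
      ζ x ∈ N ∧ ∃ b ∈ Bm, vdot * x * wdot⁻¹ = b * ζ x) :
    (∀ x ∈ OSet N Bm vdot wdot, ζ x ∈ USet N Bm vdot wdot) ∧
    (∀ y ∈ USet N Bm vdot wdot, ∃ x ∈ OSet N Bm vdot wdot, ζ x = y) ∧
    (∀ x ∈ OSet N Bm vdot wdot, ∀ x' ∈ OSet N Bm vdot wdot,
      (ζ x = ζ x' ↔ ∃ n ∈ NvSet N Nm vdot, x' = n * x)) :=
  stmt4_general Bm Nm N hNmBm vdot wdot hBN hv ζ hζ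
end

section
/- Assume B⁻ ∩ N = {1}, v̇⁻¹B⁻v̇ ∩ N ⊆ v̇⁻¹N⁻v̇, N = N(v)·N'(v), and N(v) ∩ N'(v) = {1}. Then the restriction of ζ_{v,w} to Ω_{v,w} := N'(v) ∩ O_{v,w} is a bijection from Ω_{v,w} onto U_{v,w}. -/
section BruhatCell

variable {G : Type*} [Group G] {Bm Nm N : Subgroup G} {v w : G}

theorem right_eq_of_mul_eq_mul_of_disjoint {H K : Subgroup G} (hHK : Disjoint H K)
    {h₁ h₂ k₁ k₂ : G} (hh₁ : h₁ ∈ H) (hh₂ : h₂ ∈ H) (hk₁ : k₁ ∈ K) (hk₂ : k₂ ∈ K)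
    (h : h₁ * k₁ = h₂ * k₂) : k₁ = k₂ :=
  congrArg (fun p : H × K => (p.2 : G))
    (Subgroup.mul_injective_of_disjoint hHK (a₁ := (⟨h₁, hh₁⟩, ⟨k₁, hk₁⟩))
      (a₂ := (⟨h₂, hh₂⟩, ⟨k₂, hk₂⟩)) h)

theorem conj_mul_inv_mem_of_mem_Nv'Set {x y : G} (hx : x ∈ Nv'Set N v) (hy : y ∈ Nv'Set N v) :
    v * (x * y⁻¹) * v⁻¹ ∈ N := by
  have : v * (x * y⁻¹) * v⁻¹ = (v * x * v⁻¹) * (v * y * v⁻¹)⁻¹ := by group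
  rw [this]
  exact N.mul_mem hx.2 (N.inv_mem hy.2)

theorem eq_of_mem_Nv'Set_of_mul_eq_mul (hBN : Disjoint Bm N) {x y b₁ b₂ n : G}
    (hx : x ∈ Nv'Set N v) (hy : y ∈ Nv'Set N v) (hb₁ : b₁ ∈ Bm) (hb₂ : b₂ ∈ Bm)
    (hxn : v * x * w⁻¹ = b₁ * n) (hyn : v * y * w⁻¹ = b₂ * n) : x = y := by
  have hconj : v * (x * y⁻¹) * v⁻¹ = b₁ * b₂⁻¹ := by
    calc v * (x * y⁻¹) * v⁻¹ = (v * x * w⁻¹) * (v * y * w⁻¹)⁻¹ := by group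
      _ = b₁ * b₂⁻¹ := by rw [hxn, hyn]; group
  have hone : v * (x * y⁻¹) * v⁻¹ = 1 :=
    Subgroup.disjoint_def.mp hBN (hconj ▸ Bm.mul_mem hb₁ (Bm.inv_mem hb₂))
      (conj_mul_inv_mem_of_mem_Nv'Set hx hy)
  rwa [conj_eq_one_iff, mul_inv_eq_one] at hone

theorem exists_mem_Nv'Set_mul_eq_of_mem_USet (hNmBm : Nm ≤ Bm)
    (hfactv : ∀ x ∈ N, ∃ a ∈ NvSet N Nm v, ∃ b ∈ Nv'Set N v, x = a * b)
    {u : G} (hu : u ∈ USet N Bm v w) :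
    ∃ x ∈ Nv'Set N v, ∃ c ∈ Bm, v * x * w⁻¹ = c * u := by
  obtain ⟨-, b, hb, n, hn, rfl⟩ := hu
  obtain ⟨a, ha, x, hx, rfl⟩ := hfactv n hn
  refine ⟨x, hx, (v * a * v⁻¹)⁻¹ * b⁻¹,
    Bm.mul_mem (Bm.inv_mem (hNmBm ha.2)) (Bm.inv_mem hb), by group⟩

end BruhatCell

theorem stmt5_general {G : Type*} [Group G] (Bm Nm N : Subgroup G)
    (hNmBm : Nm ≤ Bm) (vdot wdot : G)
    (hBN : ∀ x : G, x ∈ Bm → x ∈ N → x = 1)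
    (hfactv : ∀ x ∈ N, ∃ a ∈ NvSet N Nm vdot, ∃ b ∈ Nv'Set N vdot, x = a * b)
    (ζ : G → G)
    (hζ : ∀ x ∈ OSet N Bm vdot wdot,
      ζ x ∈ N ∧ ∃ b ∈ Bm, vdot * x * wdot⁻¹ = b * ζ x) :
    Set.BijOn ζ (Nv'Set N vdot ∩ OSet N Bm vdot wdot) (USet N Bm vdot wdot) := by
  have hdisj : Disjoint Bm N := Subgroup.disjoint_def.mpr fun hb hn => hBN _ hb hn
  refine ⟨?mapsTo, ?injOn, ?surjOn⟩
  case mapsTo =>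
    rintro x ⟨-, hxO⟩
    obtain ⟨hζN, b, hb, hζx⟩ := hζ x hxO
    exact ⟨hζN, b⁻¹, Bm.inv_mem hb, x, hxO.1, by
      simp only [mul_assoc] at hζx ⊢
      rw [hζx, inv_mul_cancel_left]⟩
  case injOn =>
    rintro x ⟨hxv, hxO⟩ y ⟨hyv, hyO⟩ hxy
    obtain ⟨-, b₁, hb₁, hζx⟩ := hζ x hxO
    obtain ⟨-, b₂, hb₂, hζy⟩ := hζ y hyO
    exact eq_of_mem_Nv'Set_of_mul_eq_mul hdisj hxv hyv hb₁ hb₂ (hxy ▸ hζx) hζy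
  case surjOn =>
    intro u hu
    obtain ⟨x, hxv, c, hc, hxu⟩ := exists_mem_Nv'Set_mul_eq_of_mem_USet hNmBm hfactv hu
    have hxO : x ∈ OSet N Bm vdot wdot :=
      ⟨hxv.1, c, hc, u, hu.1, mul_inv_eq_iff_eq_mul.mp hxu⟩
    obtain ⟨hζN, b, hb, hζx⟩ := hζ x hxO
    exact ⟨x, ⟨hxv, hxO⟩,
      right_eq_of_mul_eq_mul_of_disjoint hdisj hb hc hζN hu.1 (hζx.symm.trans hxu)⟩

/-- The restriction of `ζ_{v,w}` to `Ω_{v,w} = N'(v) ∩ O_{v,w}` is a bijection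
onto `U_{v,w}`. -/
theorem stmt5 {G : Type*} [Group G] (Bm B Nm N : Subgroup G)
    (hNmBm : Nm ≤ Bm) (hNB : N ≤ B) (vdot wdot : G)
    (hBN : ∀ x : G, x ∈ Bm → x ∈ N → x = 1)
    (hv : ∀ x ∈ N, vdot * x * vdot⁻¹ ∈ Bm → vdot * x * vdot⁻¹ ∈ Nm)
    (hfactv : ∀ x ∈ N, ∃ a ∈ NvSet N Nm vdot, ∃ b ∈ Nv'Set N vdot, x = a * b)
    (hdisjv : ∀ x : G, x ∈ NvSet N Nm vdot → x ∈ Nv'Set N vdot → x = 1)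
    (ζ : G → G)
    (hζ : ∀ x ∈ OSet N Bm vdot wdot,
      ζ x ∈ N ∧ ∃ b ∈ Bm, vdot * x * wdot⁻¹ = b * ζ x) :
    Set.BijOn ζ (Nv'Set N vdot ∩ OSet N Bm vdot wdot) (USet N Bm vdot wdot) :=
  stmt5_general Bm Nm N hNmBm vdot wdot hBN hfactv ζ hζ
end

section
/- Assume B⁻ ∩ N = {1}, v̇⁻¹B⁻v̇ ∩ N ⊆ v̇⁻¹N⁻v̇, N = N(v)·N'(v), N(v) ∩ N'(v) = {1}, and B⁻ẇB⁻ ⊆ B⁻ẇ(N⁻ ∩ ẇ⁻¹Nẇ). Then ζ_{v,w} restricts to a bijection from N_{v,w} onto U_{v,w} ∩ N(w⁻¹). -/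
/-!
For `x ∈ N_{v,w}` the Bruhat hypothesis gives `v x w⁻¹ = b (w m w⁻¹)` with `b ∈ B⁻`, `m ∈ N⁻` and
`w m w⁻¹ ∈ N`, so by uniqueness of the `B⁻N` factorization `ζ x = w m w⁻¹ ∈ N(w⁻¹)`.
If `ζ x = ζ y`, then `v (x y⁻¹) v⁻¹ ∈ B⁻ ∩ v N v⁻¹` lies in `N⁻`, so `x y⁻¹ ∈ N(v) ∩ N'(v) = 1`.
Conversely, for `z = b v n w⁻¹` split `n = a x` along `N = N(v) N'(v)`: since `v a v⁻¹ ∈ B⁻`,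
`x` lies in `N_{v,w}` and `ζ x = z`.
-/

section

variable {G : Type*} [Group G] {Bm Nm N : Subgroup G} {v w : G} {ζ : G → G}

theorem Subgroup.right_eq_of_mul_eq_mul_of_disjoint {H K : Subgroup G} (hHK : Disjoint H K)
    {h h' k k' : G} (hh : h ∈ H) (hh' : h' ∈ H) (hk : k ∈ K) (hk' : k' ∈ K)
    (e : h * k = h' * k') : k = k' :=
  congrArg (fun p : H × K => (p.2 : G))
    (Subgroup.mul_injective_of_disjoint hHK
      (a₁ := (⟨h, hh⟩, ⟨k, hk⟩)) (a₂ := (⟨h', hh'⟩, ⟨k', hk'⟩)) e)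

/-- `ζ` sends `x ∈ O_{v,w}` to the `N`-part `[v x w⁻¹]⁺` of a factorization in `B⁻N`. -/
def IsPlusPartMap (N Bm : Subgroup G) (v w : G) (ζ : G → G) : Prop :=
  ∀ x ∈ OSet N Bm v w, ζ x ∈ N ∧ ∃ b ∈ Bm, v * x * w⁻¹ = b * ζ x

theorem IsPlusPartMap.eq_of_mul_eq (hBN : Disjoint Bm N) (hζ : IsPlusPartMap N Bm v w ζ)
    {x b n : G} (hx : x ∈ N) (hb : b ∈ Bm) (hn : n ∈ N) (e : v * x * w⁻¹ = b * n) :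
    ζ x = n := by
  have hxO : x ∈ OSet N Bm v w := ⟨hx, b, hb, n, hn, by rw [← e]; group⟩
  obtain ⟨hζx, c, hc, hc_eq⟩ := hζ x hxO
  exact (Subgroup.right_eq_of_mul_eq_mul_of_disjoint hBN hb hc hn hζx (e.symm.trans hc_eq)).symm

theorem IsPlusPartMap.injOn (hζ : IsPlusPartMap N Bm v w ζ)
    (hv : ∀ x ∈ N, v * x * v⁻¹ ∈ Bm → v * x * v⁻¹ ∈ Nm)
    (hdisjv : ∀ x : G, x ∈ NvSet N Nm v → x ∈ Nv'Set N v → x = 1) :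
    Set.InjOn ζ (OSet N Bm v w ∩ Nv'Set N v) := by
  rintro x ⟨hxO, hxN, hvx⟩ y ⟨hyO, hyN, hvy⟩ hxy
  obtain ⟨-, c, hc, hc_eq⟩ := hζ x hxO
  obtain ⟨-, d, hd, hd_eq⟩ := hζ y hyO
  have hxy_N : x * y⁻¹ ∈ N := mul_mem hxN (inv_mem hyN)
  have hconj : v * (x * y⁻¹) * v⁻¹ = c * d⁻¹ := by
    calc v * (x * y⁻¹) * v⁻¹ = (v * x * w⁻¹) * (v * y * w⁻¹)⁻¹ := by group
      _ = c * d⁻¹ := by rw [hc_eq, hd_eq, hxy]; group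
  have hconj_Nm : v * (x * y⁻¹) * v⁻¹ ∈ Nm := hv _ hxy_N (hconj ▸ mul_mem hc (inv_mem hd))
  have hconj_N : v * (x * y⁻¹) * v⁻¹ ∈ N := by
    have : v * (x * y⁻¹) * v⁻¹ = (v * x * v⁻¹) * (v * y * v⁻¹)⁻¹ := by group
    exact this ▸ mul_mem hvx (inv_mem hvy)
  exact mul_inv_eq_one.mp (hdisjv _ ⟨hxy_N, hconj_Nm⟩ ⟨hxy_N, hconj_N⟩)

theorem exists_mul_conj_of_mem_NvwSet
    (hBruhat : {x : G | ∃ b₁ ∈ Bm, ∃ b₂ ∈ Bm, x = b₁ * w * b₂}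
        ⊆ {x : G | ∃ b ∈ Bm, ∃ m, (m ∈ Nm ∧ w * m * w⁻¹ ∈ N) ∧ x = b * w * m})
    {x : G} (hx : x ∈ NvwSet N Bm v w) :
    ∃ b ∈ Bm, ∃ m ∈ Nm, w * m * w⁻¹ ∈ N ∧ v * x * w⁻¹ = b * (w * m * w⁻¹) := by
  obtain ⟨-, b₁, hb₁, b₂, hb₂, hfac⟩ := hx
  obtain ⟨b, hb, m, ⟨hm, hwm⟩, hbwm⟩ := hBruhat ⟨b₁, hb₁, b₂, hb₂, rfl⟩
  exact ⟨b, hb, m, hm, hwm, by rw [hfac, hbwm]; group⟩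

theorem NvwSet_subset_OSet_inter_Nv'Set
    (hBruhat : {x : G | ∃ b₁ ∈ Bm, ∃ b₂ ∈ Bm, x = b₁ * w * b₂}
        ⊆ {x : G | ∃ b ∈ Bm, ∃ m, (m ∈ Nm ∧ w * m * w⁻¹ ∈ N) ∧ x = b * w * m}) :
    NvwSet N Bm v w ⊆ OSet N Bm v w ∩ Nv'Set N v := by
  intro x hx
  obtain ⟨b, hb, m, -, hwm, e⟩ := exists_mul_conj_of_mem_NvwSet hBruhat hx
  exact ⟨⟨hx.1.1, b, hb, _, hwm, by rw [← mul_inv_eq_iff_eq_mul, e]⟩, hx.1⟩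

theorem IsPlusPartMap.mapsTo (hBN : Disjoint Bm N) (hζ : IsPlusPartMap N Bm v w ζ)
    (hBruhat : {x : G | ∃ b₁ ∈ Bm, ∃ b₂ ∈ Bm, x = b₁ * w * b₂}
        ⊆ {x : G | ∃ b ∈ Bm, ∃ m, (m ∈ Nm ∧ w * m * w⁻¹ ∈ N) ∧ x = b * w * m}) :
    Set.MapsTo ζ (NvwSet N Bm v w) (USet N Bm v w ∩ NvSet N Nm w⁻¹) := by
  intro x hx
  obtain ⟨b, hb, m, hm, hwm, e⟩ := exists_mul_conj_of_mem_NvwSet hBruhat hx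
  have hζx : ζ x = w * m * w⁻¹ := hζ.eq_of_mul_eq hBN hx.1.1 hb hwm e
  refine ⟨⟨hζx ▸ hwm, b⁻¹, inv_mem hb, x, hx.1.1, ?_⟩, hζx ▸ hwm, ?_⟩
  · rw [hζx, show b⁻¹ * v * x * w⁻¹ = b⁻¹ * (v * x * w⁻¹) by group, e]; group
  · rw [hζx]; simpa [mul_assoc] using hm

theorem IsPlusPartMap.surjOn (hBN : Disjoint Bm N) (hζ : IsPlusPartMap N Bm v w ζ)
    (hNmBm : Nm ≤ Bm)
    (hfactv : ∀ x ∈ N, ∃ a ∈ NvSet N Nm v, ∃ b ∈ Nv'Set N v, x = a * b) :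
    Set.SurjOn ζ (NvwSet N Bm v w) (USet N Bm v w ∩ NvSet N Nm w⁻¹) := by
  rintro z ⟨⟨hz, b, hb, n, hn, rfl⟩, -, hwz⟩
  obtain ⟨a, ⟨-, hva⟩, x, hx', rfl⟩ := hfactv n hn
  -- Writing `n = a x` with `a ∈ N(v)`, the factor `v a v⁻¹ ∈ N⁻` is absorbed into `B⁻`.
  set c := b * (v * a * v⁻¹) with hc_def
  have hc : c ∈ Bm := mul_mem hb (hNmBm hva)
  have e : v * x * w⁻¹ = c⁻¹ * (b * v * (a * x) * w⁻¹) := by rw [hc_def]; group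
  refine ⟨x, ⟨hx', c⁻¹, inv_mem hc, w⁻¹ * (b * v * (a * x) * w⁻¹) * w,
    hNmBm (by simpa using hwz), ?_⟩, hζ.eq_of_mul_eq hBN hx'.1 (inv_mem hc) hz e⟩
  rw [hc_def]; group

end

theorem stmt6_general {G : Type*} [Group G] (Bm Nm N : Subgroup G)
    (hNmBm : Nm ≤ Bm) (vdot wdot : G)
    (hBN : ∀ x : G, x ∈ Bm → x ∈ N → x = 1)
    (hv : ∀ x ∈ N, vdot * x * vdot⁻¹ ∈ Bm → vdot * x * vdot⁻¹ ∈ Nm)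
    (hfactv : ∀ x ∈ N, ∃ a ∈ NvSet N Nm vdot, ∃ b ∈ Nv'Set N vdot, x = a * b)
    (hdisjv : ∀ x : G, x ∈ NvSet N Nm vdot → x ∈ Nv'Set N vdot → x = 1)
    (hBruhat : {x : G | ∃ b₁ ∈ Bm, ∃ b₂ ∈ Bm, x = b₁ * wdot * b₂}
        ⊆ {x : G | ∃ b ∈ Bm, ∃ m, (m ∈ Nm ∧ wdot * m * wdot⁻¹ ∈ N) ∧ x = b * wdot * m})
    (ζ : G → G)
    (hζ : ∀ x ∈ OSet N Bm vdot wdot,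
      ζ x ∈ N ∧ ∃ b ∈ Bm, vdot * x * wdot⁻¹ = b * ζ x) :
    Set.BijOn ζ (NvwSet N Bm vdot wdot)
      (USet N Bm vdot wdot ∩ NvSet N Nm wdot⁻¹) := by
  have hBN' : Disjoint Bm N := Subgroup.disjoint_def.mpr fun hb hn => hBN _ hb hn
  exact ⟨IsPlusPartMap.mapsTo hBN' hζ hBruhat,
    (IsPlusPartMap.injOn hζ hv hdisjv).mono (NvwSet_subset_OSet_inter_Nv'Set hBruhat),
    IsPlusPartMap.surjOn hBN' hζ hNmBm hfactv⟩

/-- `ζ_{v,w}` restricts to a bijection from `N_{v,w}` onto `U_{v,w} ∩ N(w⁻¹)`. -/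
theorem stmt6 {G : Type*} [Group G] (Bm B Nm N : Subgroup G)
    (hNmBm : Nm ≤ Bm) (hNB : N ≤ B) (vdot wdot : G)
    (hBN : ∀ x : G, x ∈ Bm → x ∈ N → x = 1)
    (hv : ∀ x ∈ N, vdot * x * vdot⁻¹ ∈ Bm → vdot * x * vdot⁻¹ ∈ Nm)
    (hfactv : ∀ x ∈ N, ∃ a ∈ NvSet N Nm vdot, ∃ b ∈ Nv'Set N vdot, x = a * b)
    (hdisjv : ∀ x : G, x ∈ NvSet N Nm vdot → x ∈ Nv'Set N vdot → x = 1)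
    (hBruhat : {x : G | ∃ b₁ ∈ Bm, ∃ b₂ ∈ Bm, x = b₁ * wdot * b₂}
        ⊆ {x : G | ∃ b ∈ Bm, ∃ m, (m ∈ Nm ∧ wdot * m * wdot⁻¹ ∈ N) ∧ x = b * wdot * m})
    (ζ : G → G)
    (hζ : ∀ x ∈ OSet N Bm vdot wdot,
      ζ x ∈ N ∧ ∃ b ∈ Bm, vdot * x * wdot⁻¹ = b * ζ x) :
    Set.BijOn ζ (NvwSet N Bm vdot wdot)
      (USet N Bm vdot wdot ∩ NvSet N Nm wdot⁻¹) :=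
  stmt6_general Bm Nm N hNmBm vdot wdot hBN hv hfactv hdisjv hBruhat ζ hζ
end

section
/- (a) For every y ∈ U_{v,w} and every n ∈ N'(w⁻¹), the product yn belongs to U_{v,w}; thus N'(w⁻¹) acts freely on U_{v,w} by right multiplication. (b) Assume B⁻ ∩ N = {1}. Then the conjugation map φ_w(n) := ẇnẇ⁻¹ is a group isomorphism from N'(w) onto N'(w⁻¹), and for every x ∈ O_{v,w} and n ∈ N'(w) one has xn ∈ O_{v,w} and ζ_{v,w}(xn) = ζ_{v,w}(x)·φ_w(n). -/
/-!
For `n ∈ N'(w⁻¹)` the conjugate `w⁻¹ n w` lies in `N`, so `b v n' w⁻¹ · n = b v (n' · w⁻¹ n w) w⁻¹` stays in `U_{v,w}`.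
For `n ∈ N'(w)` one has `v (x n) w⁻¹ = (v x w⁻¹) · (w n w⁻¹) = b · ζ(x) (w n w⁻¹)` with
`ζ(x) (w n w⁻¹) ∈ N`, and since `B⁻ ∩ N = {1}` the `N`-factor of an element of `B⁻ N` is unique.
-/

section

variable {G : Type*} [Group G] {Bm N : Subgroup G}

theorem conj_mem_Nv'Set_inv {w n : G} (hn : n ∈ Nv'Set N w) :
    w * n * w⁻¹ ∈ Nv'Set N w⁻¹ :=
  ⟨hn.2, show w⁻¹ * (w * n * w⁻¹) * w⁻¹⁻¹ ∈ N by group; exact hn.1⟩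

theorem bijOn_conj_Nv'Set (w : G) :
    Set.BijOn (fun n => w * n * w⁻¹) (Nv'Set N w) (Nv'Set N w⁻¹) := by
  refine Set.InvOn.bijOn (f' := fun m => w⁻¹ * m * w) ⟨fun _ _ => by group, fun _ _ => by group⟩
    (fun _ hn => conj_mem_Nv'Set_inv hn) fun m hm => ?_
  simpa only [inv_inv] using conj_mem_Nv'Set_inv hm

theorem mul_mem_USet {v w y n : G} (hy : y ∈ USet N Bm v w) (hn : n ∈ Nv'Set N w⁻¹) :
    y * n ∈ USet N Bm v w := by
  obtain ⟨hyN, b, hb, n', hn', rfl⟩ := hy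
  refine ⟨mul_mem hyN hn.1, b, hb, n' * (w⁻¹ * n * w⁻¹⁻¹), mul_mem hn' hn.2, ?_⟩
  group

theorem mul_mem_OSet {v w x n : G} (hx : x ∈ OSet N Bm v w) (hn : n ∈ Nv'Set N w) :
    x * n ∈ OSet N Bm v w := by
  obtain ⟨hxN, b, hb, n', hn', hvx⟩ := hx
  refine ⟨mul_mem hxN hn.1, b, hb, n' * (w * n * w⁻¹), mul_mem hn' hn.2, ?_⟩
  rw [← mul_assoc, hvx]
  group

theorem right_factor_unique (hBN : ∀ x : G, x ∈ Bm → x ∈ N → x = 1) {b₁ b₂ n₁ n₂ : G}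
    (hb₁ : b₁ ∈ Bm) (hb₂ : b₂ ∈ Bm) (hn₁ : n₁ ∈ N) (hn₂ : n₂ ∈ N)
    (h : b₁ * n₁ = b₂ * n₂) : n₁ = n₂ := by
  have hquot : b₂⁻¹ * b₁ = n₂ * n₁⁻¹ := by
    calc b₂⁻¹ * b₁ = b₂⁻¹ * (b₁ * n₁) * n₁⁻¹ := by group
      _ = n₂ * n₁⁻¹ := by rw [h]; group
  have hone := hBN _ (mul_mem (inv_mem hb₂) hb₁) (hquot ▸ mul_mem hn₂ (inv_mem hn₁))
  exact (mul_inv_eq_one.mp (hquot ▸ hone)).symm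

theorem zeta_mul_eq {v w x n : G} {ζ : G → G} (hBN : ∀ x : G, x ∈ Bm → x ∈ N → x = 1)
    (hζ : ∀ x ∈ OSet N Bm v w, ζ x ∈ N ∧ ∃ b ∈ Bm, v * x * w⁻¹ = b * ζ x)
    (hx : x ∈ OSet N Bm v w) (hn : n ∈ Nv'Set N w) :
    ζ (x * n) = ζ x * (w * n * w⁻¹) := by
  obtain ⟨hζx, b₁, hb₁, hx'⟩ := hζ x hx
  obtain ⟨hζxn, b₂, hb₂, hxn'⟩ := hζ (x * n) (mul_mem_OSet hx hn)
  refine right_factor_unique hBN hb₂ hb₁ hζxn (mul_mem hζx hn.2) ?_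
  calc b₂ * ζ (x * n) = v * x * w⁻¹ * (w * n * w⁻¹) := by rw [← hxn']; group
    _ = b₁ * (ζ x * (w * n * w⁻¹)) := by rw [hx', mul_assoc]

end

theorem stmt7_general {G : Type*} [Group G] (Bm N : Subgroup G)
    (vdot wdot : G)
    (hBN : ∀ x : G, x ∈ Bm → x ∈ N → x = 1)
    (ζ : G → G)
    (hζ : ∀ x ∈ OSet N Bm vdot wdot,
      ζ x ∈ N ∧ ∃ b ∈ Bm, vdot * x * wdot⁻¹ = b * ζ x) :
    ((∀ y ∈ USet N Bm vdot wdot, ∀ n ∈ Nv'Set N wdot⁻¹, y * n ∈ USet N Bm vdot wdot) ∧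
     (∀ y ∈ USet N Bm vdot wdot, ∀ n ∈ Nv'Set N wdot⁻¹, y * n = y → n = 1)) ∧
    (Set.BijOn (fun n => wdot * n * wdot⁻¹) (Nv'Set N wdot) (Nv'Set N wdot⁻¹) ∧
     (∀ m n : G, wdot * (m * n) * wdot⁻¹ = (wdot * m * wdot⁻¹) * (wdot * n * wdot⁻¹)) ∧
     (∀ x ∈ OSet N Bm vdot wdot, ∀ n ∈ Nv'Set N wdot,
       x * n ∈ OSet N Bm vdot wdot ∧ ζ (x * n) = ζ x * (wdot * n * wdot⁻¹))) :=
  ⟨⟨fun _ hy _ hn => mul_mem_USet hy hn, fun _ _ _ _ => mul_eq_left.mp⟩,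
    bijOn_conj_Nv'Set wdot, fun m n => by group,
    fun _ hx _ hn => ⟨mul_mem_OSet hx hn, zeta_mul_eq hBN hζ hx hn⟩⟩

/-- (a) `N'(w⁻¹)` acts freely on `U_{v,w}` by right multiplication.
(b) Assuming `B⁻ ∩ N = {1}`, conjugation `φ_w(n) = ẇ n ẇ⁻¹` is a group isomorphism from
`N'(w)` onto `N'(w⁻¹)`, and for `x ∈ O_{v,w}`, `n ∈ N'(w)` one has `x n ∈ O_{v,w}` and
`ζ_{v,w}(x n) = ζ_{v,w}(x) · φ_w(n)`. -/
theorem stmt7 {G : Type*} [Group G] (Bm B Nm N : Subgroup G)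
    (hNmBm : Nm ≤ Bm) (hNB : N ≤ B) (vdot wdot : G)
    (hBN : ∀ x : G, x ∈ Bm → x ∈ N → x = 1)
    (ζ : G → G)
    (hζ : ∀ x ∈ OSet N Bm vdot wdot,
      ζ x ∈ N ∧ ∃ b ∈ Bm, vdot * x * wdot⁻¹ = b * ζ x) :
    ((∀ y ∈ USet N Bm vdot wdot, ∀ n ∈ Nv'Set N wdot⁻¹, y * n ∈ USet N Bm vdot wdot) ∧
     (∀ y ∈ USet N Bm vdot wdot, ∀ n ∈ Nv'Set N wdot⁻¹, y * n = y → n = 1)) ∧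
    (Set.BijOn (fun n => wdot * n * wdot⁻¹) (Nv'Set N wdot) (Nv'Set N wdot⁻¹) ∧
     (∀ m n : G, wdot * (m * n) * wdot⁻¹ = (wdot * m * wdot⁻¹) * (wdot * n * wdot⁻¹)) ∧
     (∀ x ∈ OSet N Bm vdot wdot, ∀ n ∈ Nv'Set N wdot,
       x * n ∈ OSet N Bm vdot wdot ∧ ζ (x * n) = ζ x * (wdot * n * wdot⁻¹))) :=
  stmt7_general Bm N vdot wdot hBN ζ hζ
end

section
/- Assume B⁻ ∩ N = {1}, v̇⁻¹B⁻v̇ ∩ N ⊆ v̇⁻¹N⁻v̇, N = N(v)·N'(v) with N(v) ∩ N'(v) = {1}, N = N(w⁻¹)·N'(w⁻¹) with N(w⁻¹) ∩ N'(w⁻¹) = {1}, and B⁻ẇB⁻ ⊆ B⁻ẇ(N⁻ ∩ ẇ⁻¹Nẇ). Then the multiplication map (n₁, y, n₂) ↦ n₁·y·n₂ is a bijection from N(v) × N_{v,w} × N'(w) onto O_{v,w}. (This is the main structural theorem: every element of the open set O_{v,w} factors uniquely as a product of an element of N(v), an element of N_{v,w}, and an element of N'(w).) -/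
/-! Proof idea: for `y ∈ N_{v,w}` the Bruhat hypothesis rewrites `v y w⁻¹` as `c · a` with
`c ∈ B⁻` and `a ∈ N(w⁻¹)`, so `v (n₁ y n₂) w⁻¹ = (v n₁ v⁻¹ c) · (a · w n₂ w⁻¹) ∈ B⁻ N`.
Injectivity peels off the three factors using, in turn, the uniqueness of the factorizations
`B⁻ · N`, `N = N(w⁻¹) · N'(w⁻¹)` and `N = N(v) · N'(v)`; for surjectivity, write `v x = b n w`,
split `n = a n'` along `N(w⁻¹) · N'(w⁻¹)`, put `n₂ = w⁻¹ n' w` and split `x n₂⁻¹ = n₁ y`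
along `N(v) · N'(v)`. -/

namespace Subgroup

variable {G : Type*} [Group G]

theorem eq_and_eq_of_mul_eq_mul_of_disjoint {H K : Subgroup G} (hHK : Disjoint H K)
    {h h' k k' : G} (hh : h ∈ H) (hh' : h' ∈ H) (hk : k ∈ K) (hk' : k' ∈ K)
    (heq : h * k = h' * k') : h = h' ∧ k = k' := by
  simpa [Prod.ext_iff] using mul_injective_of_disjoint hHK
    (a₁ := (⟨h, hh⟩, ⟨k, hk⟩)) (a₂ := (⟨h', hh'⟩, ⟨k', hk'⟩)) heq

end Subgroup

section

variable {G : Type*} [Group G] {Bm Nm N : Subgroup G} {v w : G}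

/-- The subgroups whose carriers are `NvSet N Nm v` and `Nv'Set N v` (definitionally). -/
def NvSubgroup (N Nm : Subgroup G) (v : G) : Subgroup G :=
  N ⊓ Nm.comap (MulAut.conj v).toMonoidHom

def Nv'Subgroup (N : Subgroup G) (v : G) : Subgroup G :=
  N ⊓ N.comap (MulAut.conj v).toMonoidHom

/-- `B⁻ w B⁻ ⊆ B⁻ w (N⁻ ∩ w⁻¹ N w)`. -/
def BruhatCellSplits (Bm Nm N : Subgroup G) (w : G) : Prop :=
  {x : G | ∃ b₁ ∈ Bm, ∃ b₂ ∈ Bm, x = b₁ * w * b₂}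
    ⊆ {x : G | ∃ b ∈ Bm, ∃ m, (m ∈ Nm ∧ w * m * w⁻¹ ∈ N) ∧ x = b * w * m}

theorem conj_mem_NvSet_inv {m : G} (hm : m ∈ Nm) (hwm : w * m * w⁻¹ ∈ N) :
    w * m * w⁻¹ ∈ NvSet N Nm w⁻¹ :=
  ⟨hwm, by simpa [mul_assoc] using hm⟩

theorem conj_mem_Nm_of_mem_NvSet_inv {a : G} (ha : a ∈ NvSet N Nm w⁻¹) : w⁻¹ * a * w ∈ Nm := by
  simpa using ha.2

theorem conj_mem_Nv'Set_inv_iff {n : G} : w * n * w⁻¹ ∈ Nv'Set N w⁻¹ ↔ n ∈ Nv'Set N w := by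
  simp [Nv'Set, mul_assoc, and_comm]

theorem exists_conj_eq_of_mem_NvwSet
    (hBruhat : BruhatCellSplits Bm Nm N w)
    {y : G} (hy : y ∈ NvwSet N Bm v w) :
    ∃ c ∈ Bm, ∃ a ∈ NvSet N Nm w⁻¹, v * y * w⁻¹ = c * a := by
  obtain ⟨-, b₁, hb₁, b₂, hb₂, hvy⟩ := hy
  obtain ⟨c, hc, m, ⟨hm, hwm⟩, hvy'⟩ := hBruhat ⟨b₁, hb₁, b₂, hb₂, hvy⟩
  refine ⟨c, hc, w * m * w⁻¹, conj_mem_NvSet_inv hm hwm, ?_⟩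
  rw [hvy']
  group

theorem exists_conj_mul_mul_eq (hNmBm : Nm ≤ Bm)
    (hBruhat : BruhatCellSplits Bm Nm N w)
    {n₁ y n₂ : G} (hn₁ : n₁ ∈ NvSet N Nm v) (hy : y ∈ NvwSet N Bm v w) :
    ∃ c ∈ Bm, ∃ a ∈ NvSet N Nm w⁻¹, v * (n₁ * y * n₂) * w⁻¹ = c * (a * (w * n₂ * w⁻¹)) := by
  obtain ⟨c, hc, a, ha, hvy⟩ := exists_conj_eq_of_mem_NvwSet hBruhat hy
  refine ⟨v * n₁ * v⁻¹ * c, Bm.mul_mem (hNmBm hn₁.2) hc, a, ha, ?_⟩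
  calc v * (n₁ * y * n₂) * w⁻¹ = v * n₁ * v⁻¹ * (v * y * w⁻¹) * (w * n₂ * w⁻¹) := by group
    _ = _ := by rw [hvy]; group

theorem mapsTo_mul_OSet (hNmBm : Nm ≤ Bm) (hBruhat : BruhatCellSplits Bm Nm N w) :
    Set.MapsTo (fun p : G × G × G => p.1 * p.2.1 * p.2.2)
      (NvSet N Nm v ×ˢ NvwSet N Bm v w ×ˢ Nv'Set N w) (OSet N Bm v w) := by
  rintro ⟨n₁, y, n₂⟩ ⟨hn₁, hy, hn₂⟩
  obtain ⟨c, hc, a, ha, hx⟩ := exists_conj_mul_mul_eq (n₂ := n₂) hNmBm hBruhat hn₁ hy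
  refine ⟨N.mul_mem (N.mul_mem hn₁.1 hy.1.1) hn₂.1, c, hc, a * (w * n₂ * w⁻¹),
    N.mul_mem ha.1 hn₂.2, ?_⟩
  rw [← hx]
  group

theorem injOn_mul (hNmBm : Nm ≤ Bm) (hBruhat : BruhatCellSplits Bm Nm N w)
    (hBN : Disjoint Bm N) (hdisjv : Disjoint (NvSubgroup N Nm v) (Nv'Subgroup N v))
    (hdisjw : Disjoint (NvSubgroup N Nm w⁻¹) (Nv'Subgroup N w⁻¹)) :
    Set.InjOn (fun p : G × G × G => p.1 * p.2.1 * p.2.2)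
      (NvSet N Nm v ×ˢ NvwSet N Bm v w ×ˢ Nv'Set N w) := by
  rintro ⟨n₁, y, n₂⟩ ⟨hn₁, hy, hn₂⟩ ⟨n₁', y', n₂'⟩ ⟨hn₁', hy', hn₂'⟩
    (heq : n₁ * y * n₂ = n₁' * y' * n₂')
  obtain ⟨c, hc, a, ha, hx⟩ := exists_conj_mul_mul_eq (n₂ := n₂) hNmBm hBruhat hn₁ hy
  obtain ⟨c', hc', a', ha', hx'⟩ := exists_conj_mul_mul_eq (n₂ := n₂') hNmBm hBruhat hn₁' hy'
  have hplus : a * (w * n₂ * w⁻¹) = a' * (w * n₂' * w⁻¹) :=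
    (Subgroup.eq_and_eq_of_mul_eq_mul_of_disjoint hBN hc hc' (N.mul_mem ha.1 hn₂.2)
      (N.mul_mem ha'.1 hn₂'.2) (by rw [← hx, ← hx', heq])).2
  have hn₂eq : n₂ = n₂' := by
    have := (Subgroup.eq_and_eq_of_mul_eq_mul_of_disjoint hdisjw ha ha'
      (conj_mem_Nv'Set_inv_iff.mpr hn₂) (conj_mem_Nv'Set_inv_iff.mpr hn₂') hplus).2
    simpa using this
  subst hn₂eq
  obtain ⟨rfl, rfl⟩ := Subgroup.eq_and_eq_of_mul_eq_mul_of_disjoint hdisjv hn₁ hn₁' hy.1 hy'.1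
    (mul_right_cancel heq)
  rfl

theorem surjOn_mul (hNmBm : Nm ≤ Bm)
    (hfactv : ∀ x ∈ N, ∃ a ∈ NvSet N Nm v, ∃ b ∈ Nv'Set N v, x = a * b)
    (hfactw : ∀ x ∈ N, ∃ a ∈ NvSet N Nm w⁻¹, ∃ b ∈ Nv'Set N w⁻¹, x = a * b) :
    Set.SurjOn (fun p : G × G × G => p.1 * p.2.1 * p.2.2)
      (NvSet N Nm v ×ˢ NvwSet N Bm v w ×ˢ Nv'Set N w) (OSet N Bm v w) := by
  rintro x ⟨hx, b, hb, n, hn, hvx⟩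
  obtain ⟨a, ha, n', hn', rfl⟩ := hfactw n hn
  have hn₂ : w⁻¹ * n' * w ∈ Nv'Set N w :=
    conj_mem_Nv'Set_inv_iff.mp (by simpa [mul_assoc] using hn')
  obtain ⟨n₁, hn₁, y, hy, hxy⟩ := hfactv (x * (w⁻¹ * n' * w)⁻¹) (N.mul_mem hx (N.inv_mem hn₂.1))
  have hx' : x = n₁ * y * (w⁻¹ * n' * w) := eq_mul_of_mul_inv_eq hxy
  have hvy : v * y = (v * n₁ * v⁻¹)⁻¹ * b * w * (w⁻¹ * a * w) :=
    calc v * y = v * n₁⁻¹ * v⁻¹ * (v * x) * (w⁻¹ * n' * w)⁻¹ := by rw [hx']; group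
      _ = _ := by rw [hvx]; group
  refine ⟨(n₁, y, w⁻¹ * n' * w), ⟨hn₁, ⟨hy, _, Bm.mul_mem (Bm.inv_mem (hNmBm hn₁.2)) hb, _,
    hNmBm (conj_mem_Nm_of_mem_NvSet_inv ha), hvy⟩, hn₂⟩, hx'.symm⟩

end

theorem stmt8_general {G : Type*} [Group G] (Bm Nm N : Subgroup G)
    (hNmBm : Nm ≤ Bm) (vdot wdot : G)
    (hBN : ∀ x : G, x ∈ Bm → x ∈ N → x = 1)
    (hfactv : ∀ x ∈ N, ∃ a ∈ NvSet N Nm vdot, ∃ b ∈ Nv'Set N vdot, x = a * b)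
    (hdisjv : ∀ x : G, x ∈ NvSet N Nm vdot → x ∈ Nv'Set N vdot → x = 1)
    (hfactw : ∀ x ∈ N, ∃ a ∈ NvSet N Nm wdot⁻¹, ∃ b ∈ Nv'Set N wdot⁻¹, x = a * b)
    (hdisjw : ∀ x : G, x ∈ NvSet N Nm wdot⁻¹ → x ∈ Nv'Set N wdot⁻¹ → x = 1)
    (hBruhat : {x : G | ∃ b₁ ∈ Bm, ∃ b₂ ∈ Bm, x = b₁ * wdot * b₂}
        ⊆ {x : G | ∃ b ∈ Bm, ∃ m, (m ∈ Nm ∧ wdot * m * wdot⁻¹ ∈ N) ∧ x = b * wdot * m}) :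
    Set.BijOn (fun p : G × G × G => p.1 * p.2.1 * p.2.2)
      ((NvSet N Nm vdot) ×ˢ ((NvwSet N Bm vdot wdot) ×ˢ (Nv'Set N wdot)))
      (OSet N Bm vdot wdot) :=
  ⟨mapsTo_mul_OSet hNmBm hBruhat,
    injOn_mul hNmBm hBruhat (Subgroup.disjoint_def.mpr (hBN _))
      (Subgroup.disjoint_def.mpr (hdisjv _)) (Subgroup.disjoint_def.mpr (hdisjw _)),
    surjOn_mul hNmBm hfactv hfactw⟩

/-- the multiplication map `(n₁, y, n₂) ↦ n₁ y n₂` is a bijection from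
`N(v) × N_{v,w} × N'(w)` onto `O_{v,w}`. -/
theorem stmt8 {G : Type*} [Group G] (Bm B Nm N : Subgroup G)
    (hNmBm : Nm ≤ Bm) (hNB : N ≤ B) (vdot wdot : G)
    (hBN : ∀ x : G, x ∈ Bm → x ∈ N → x = 1)
    (hv : ∀ x ∈ N, vdot * x * vdot⁻¹ ∈ Bm → vdot * x * vdot⁻¹ ∈ Nm)
    (hfactv : ∀ x ∈ N, ∃ a ∈ NvSet N Nm vdot, ∃ b ∈ Nv'Set N vdot, x = a * b)
    (hdisjv : ∀ x : G, x ∈ NvSet N Nm vdot → x ∈ Nv'Set N vdot → x = 1)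
    (hfactw : ∀ x ∈ N, ∃ a ∈ NvSet N Nm wdot⁻¹, ∃ b ∈ Nv'Set N wdot⁻¹, x = a * b)
    (hdisjw : ∀ x : G, x ∈ NvSet N Nm wdot⁻¹ → x ∈ Nv'Set N wdot⁻¹ → x = 1)
    (hBruhat : {x : G | ∃ b₁ ∈ Bm, ∃ b₂ ∈ Bm, x = b₁ * wdot * b₂}
        ⊆ {x : G | ∃ b ∈ Bm, ∃ m, (m ∈ Nm ∧ wdot * m * wdot⁻¹ ∈ N) ∧ x = b * wdot * m}) :
    Set.BijOn (fun p : G × G × G => p.1 * p.2.1 * p.2.2)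
      ((NvSet N Nm vdot) ×ˢ ((NvwSet N Bm vdot wdot) ×ˢ (Nv'Set N wdot)))
      (OSet N Bm vdot wdot) :=
  stmt8_general Bm Nm N hNmBm vdot wdot hBN hfactv hdisjv hfactw hdisjw hBruhat
end

section
/- Assume B⁻ ∩ N = {1}, v̇⁻¹B⁻v̇ ∩ N ⊆ v̇⁻¹N⁻v̇, N = N(v)·N'(v) with N(v) ∩ N'(v) = {1}, N = N(w⁻¹)·N'(w⁻¹) with N(w⁻¹) ∩ N'(w⁻¹) = {1}, and B⁻ẇB⁻ ⊆ B⁻ẇ(N⁻ ∩ ẇ⁻¹Nẇ). Consider the ring of doubly invariant ℂ-valued functions on O_{v,w}, namely {f : O_{v,w} → ℂ : f(n₁yn₂) = f(y) for all n₁ ∈ N(v), y ∈ O_{v,w}, n₂ ∈ N'(w)}, with pointwise addition and multiplication. Then the restriction map f ↦ f|_{N_{v,w}} is a ring isomorphism from this ring of invariant functions onto the ring of all ℂ-valued functions on N_{v,w}. -/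
/-!
Write `A = N(v)` and `C = N'(w)`. Every `y ∈ O_{v,w}` factors as `y = a z c` with `a ∈ A`,
`z ∈ N_{v,w}`, `c ∈ C`: split the `N`-part of `v̇ y ∈ B⁻ N ẇ` along `N(w⁻¹) N'(w⁻¹)` to get `c`,
then split `y c⁻¹` along `N(v) N'(v)`. The middle factor is unique: writing `v̇ z` and `v̇ z'` in
the form `B⁻ ẇ (N⁻ ∩ ẇ⁻¹Nẇ)` and comparing, `B⁻ ∩ N = 1` forces first `c = 1` and then `a = 1`.
So `N_{v,w}` is a cross-section of the `(A, C)`-double cosets meeting `O_{v,w}`, and an invariant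
function on `O_{v,w}` is the same thing as an arbitrary function on `N_{v,w}`.
-/

open DoubleCoset

section DoubleCosetSection

variable {G : Type*} [Group G] (A C : Subgroup G)

def doubleCosetInvariants (O : Set G) (β : Type*) : Set (O → β) :=
  {f | ∀ n₁ ∈ A, ∀ y : O, ∀ n₂ ∈ C, ∀ h : n₁ * (y : G) * n₂ ∈ O, f ⟨n₁ * y * n₂, h⟩ = f y}

variable {A C}

theorem apply_eq_of_mk_eq {O : Set G} {β : Type*} {f : O → β}
    (hf : f ∈ doubleCosetInvariants A C O β) {y y' : O} (h : mk A C y = mk A C y') :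
    f y' = f y := by
  obtain ⟨a, ha, c, hc, hy'⟩ := (DoubleCoset.eq A C _ _).1 h
  rw [← hf a ha y c hc (hy' ▸ y'.2)]
  exact congrArg f (Subtype.ext hy')

theorem bijOn_restrict_doubleCosetInvariants {O S : Set G} (hSO : S ⊆ O)
    (hinj : S.InjOn (mk A C)) (hsurj : Set.SurjOn (mk A C) S (mk A C '' O)) (β : Type*) :
    Set.BijOn (fun (f : O → β) (z : S) => f ⟨z, hSO z.2⟩)
      (doubleCosetInvariants A C O β) Set.univ := by
  choose π hπS hπ using fun y : O => hsurj ⟨y, y.2, rfl⟩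
  have hπ_mk : ∀ {y y' : O}, mk A C y = mk A C y' → π y = π y' := fun h =>
    hinj (hπS _) (hπS _) (by rw [hπ, hπ, h])
  refine ⟨fun _ _ => trivial, fun f hf g hg hfg => funext fun y => ?_, fun g _ => ?_⟩
  · have hy : mk A C (π y) = mk A C y := hπ y
    rw [apply_eq_of_mk_eq hf (y := ⟨π y, hSO (hπS y)⟩) hy,
      apply_eq_of_mk_eq hg (y := ⟨π y, hSO (hπS y)⟩) hy]
    exact congrFun hfg ⟨π y, hπS y⟩
  · refine ⟨fun y => g ⟨π y, hπS y⟩, fun n₁ hn₁ y n₂ hn₂ h => ?_, funext fun z => ?_⟩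
    · have hy : mk A C y = mk A C (n₁ * y * n₂) :=
        (DoubleCoset.eq A C _ _).2 ⟨n₁, hn₁, n₂, hn₂, rfl⟩
      simp only [hπ_mk (y' := ⟨_, h⟩) hy]
    · exact congrArg g (Subtype.ext (hinj (hπS _) z.2 (hπ _)))

end DoubleCosetSection

section BruhatCells

variable {G : Type*} [Group G] {Bm Nm N : Subgroup G} {v w : G}

/-- `N(v) = NvSet N Nm v` as a subgroup; `nvSubgroup N N v` is `N'(v)`. -/
def nvSubgroup (N Nm : Subgroup G) (v : G) : Subgroup G :=
  N ⊓ Nm.comap (MulAut.conj v).toMonoidHom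

theorem nvwSet_subset_oSet
    (hBruhat : {x : G | ∃ b₁ ∈ Bm, ∃ b₂ ∈ Bm, x = b₁ * w * b₂}
        ⊆ {x : G | ∃ b ∈ Bm, ∃ m, (m ∈ Nm ∧ w * m * w⁻¹ ∈ N) ∧ x = b * w * m}) :
    NvwSet N Bm v w ⊆ OSet N Bm v w := by
  rintro z ⟨⟨hzN, -⟩, b₁, hb₁, b₂, hb₂, hvz⟩
  obtain ⟨b, hb, m, ⟨-, hmN⟩, heq⟩ := hBruhat ⟨b₁, hb₁, b₂, hb₂, hvz⟩
  exact ⟨hzN, b, hb, w * m * w⁻¹, hmN, by rw [heq]; group⟩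

theorem surjOn_mk_nvwSet (hNmBm : Nm ≤ Bm)
    (hfactv : ∀ x ∈ N, ∃ a ∈ NvSet N Nm v, ∃ b ∈ Nv'Set N v, x = a * b)
    (hfactw : ∀ x ∈ N, ∃ a ∈ NvSet N Nm w⁻¹, ∃ b ∈ Nv'Set N w⁻¹, x = a * b) :
    Set.SurjOn (mk (nvSubgroup N Nm v) (nvSubgroup N N w)) (NvwSet N Bm v w)
      (mk (nvSubgroup N Nm v) (nvSubgroup N N w) '' OSet N Bm v w) := by
  rintro _ ⟨y, ⟨hyN, b, hb, n, hn, hvy⟩, rfl⟩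
  obtain ⟨m₁, ⟨-, hm₁⟩, m₂, ⟨hm₂N, hm₂⟩, rfl⟩ := hfactw n hn
  rw [inv_inv] at hm₁ hm₂
  -- `c := w⁻¹ m₂ w` moves the `N'(w⁻¹)`-part of `n` across `w`
  have hc : w⁻¹ * m₂ * w ∈ nvSubgroup N N w := ⟨hm₂, by simpa [mul_assoc] using hm₂N⟩
  obtain ⟨a, ha, z, hz, hyc⟩ := hfactv _ (N.mul_mem hyN (N.inv_mem hc.1))
  have hvz : v * z = ((v * a * v⁻¹)⁻¹ * b) * w * (w⁻¹ * m₁ * w) := by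
    calc v * z = (v * a * v⁻¹)⁻¹ * (v * (a * z)) := by group
      _ = (v * a * v⁻¹)⁻¹ * (v * y) * (w⁻¹ * m₂ * w)⁻¹ := by rw [← hyc]; group
      _ = _ := by rw [hvy]; group
  refine ⟨z, ⟨hz, _, Bm.mul_mem (Bm.inv_mem (hNmBm ha.2)) hb, _, hNmBm hm₁, hvz⟩,
    (DoubleCoset.eq _ _ _ _).2 ⟨a, ha, _, hc, ?_⟩⟩
  rw [← hyc]; group

theorem eq_one_of_mul_eq_of_bruhat (hNmBm : Nm ≤ Bm) (hBN : ∀ x : G, x ∈ Bm → x ∈ N → x = 1)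
    {b b' m m' c : G} (hb : b ∈ Bm) (hb' : b' ∈ Bm) (hm : m ∈ Nm) (hwm : w * m * w⁻¹ ∈ N)
    (hm' : m' ∈ Nm) (hwm' : w * m' * w⁻¹ ∈ N) (hc : c ∈ nvSubgroup N N w)
    (h : b * w * m * c = b' * w * m') : c = 1 := by
  have hβ : b'⁻¹ * b = (w * m' * w⁻¹) * (w * c * w⁻¹)⁻¹ * (w * m * w⁻¹)⁻¹ := by
    calc b'⁻¹ * b = b'⁻¹ * (b * w * m * c) * c⁻¹ * m⁻¹ * w⁻¹ := by group
      _ = _ := by rw [h]; group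
  have hβ_one : b'⁻¹ * b = 1 := hBN _ (Bm.mul_mem (Bm.inv_mem hb') hb)
    (hβ ▸ N.mul_mem (N.mul_mem hwm' (N.inv_mem hc.2)) (N.inv_mem hwm))
  have hc_eq : c = m⁻¹ * m' := by
    calc c = m⁻¹ * (w⁻¹ * (b'⁻¹ * b)⁻¹ * w) * m' := by rw [hβ]; group
      _ = m⁻¹ * m' := by rw [hβ_one]; group
  exact hBN c (hNmBm (hc_eq ▸ Nm.mul_mem (Nm.inv_mem hm) hm')) hc.1

theorem eq_one_of_mul_mem_nv'Set (hNmBm : Nm ≤ Bm) (hBN : ∀ x : G, x ∈ Bm → x ∈ N → x = 1)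
    {a z : G} (ha : a ∈ nvSubgroup N Nm v) (hz : z ∈ Nv'Set N v) (haz : a * z ∈ Nv'Set N v) :
    a = 1 := by
  have hva : v * a * v⁻¹ = (v * (a * z) * v⁻¹) * (v * z * v⁻¹)⁻¹ := by group
  exact conj_eq_one_iff.1 (hBN _ (hNmBm ha.2) (hva ▸ N.mul_mem haz.2 (N.inv_mem hz.2)))

theorem injOn_mk_nvwSet (hNmBm : Nm ≤ Bm) (hBN : ∀ x : G, x ∈ Bm → x ∈ N → x = 1)
    (hBruhat : {x : G | ∃ b₁ ∈ Bm, ∃ b₂ ∈ Bm, x = b₁ * w * b₂}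
        ⊆ {x : G | ∃ b ∈ Bm, ∃ m, (m ∈ Nm ∧ w * m * w⁻¹ ∈ N) ∧ x = b * w * m}) :
    (NvwSet N Bm v w).InjOn (mk (nvSubgroup N Nm v) (nvSubgroup N N w)) := by
  intro z ⟨hz, b₁, hb₁, b₂, hb₂, hvz⟩ _ ⟨hz', b₁', hb₁', b₂', hb₂', hvz'⟩ h
  obtain ⟨a, ha, c, hc, rfl⟩ := (DoubleCoset.eq _ _ _ _).1 h
  obtain ⟨b, hb, m, ⟨hm, hwm⟩, hvz_eq⟩ := hBruhat ⟨b₁, hb₁, b₂, hb₂, hvz⟩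
  obtain ⟨b', hb', m', ⟨hm', hwm'⟩, hvz'_eq⟩ := hBruhat ⟨b₁', hb₁', b₂', hb₂', hvz'⟩
  have hc_one : c = 1 := by
    refine eq_one_of_mul_eq_of_bruhat hNmBm hBN (Bm.mul_mem (hNmBm ha.2) hb) hb' hm hwm hm'
      hwm' hc ?_
    calc v * a * v⁻¹ * b * w * m * c = v * a * v⁻¹ * (b * w * m) * c := by group
      _ = b' * w * m' := by rw [← hvz_eq, ← hvz'_eq]; group
  subst hc_one
  rw [mul_one] at hz' ⊢
  rw [eq_one_of_mul_mem_nv'Set hNmBm hBN ha hz hz', one_mul]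

end BruhatCells

theorem stmt9_general {G : Type*} [Group G] (Bm Nm N : Subgroup G)
    (hNmBm : Nm ≤ Bm) (vdot wdot : G)
    (hBN : ∀ x : G, x ∈ Bm → x ∈ N → x = 1)
    (hfactv : ∀ x ∈ N, ∃ a ∈ NvSet N Nm vdot, ∃ b ∈ Nv'Set N vdot, x = a * b)
    (hfactw : ∀ x ∈ N, ∃ a ∈ NvSet N Nm wdot⁻¹, ∃ b ∈ Nv'Set N wdot⁻¹, x = a * b)
    (hBruhat : {x : G | ∃ b₁ ∈ Bm, ∃ b₂ ∈ Bm, x = b₁ * wdot * b₂}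
        ⊆ {x : G | ∃ b ∈ Bm, ∃ m, (m ∈ Nm ∧ wdot * m * wdot⁻¹ ∈ N) ∧ x = b * wdot * m}) :
    ∃ hsub : NvwSet N Bm vdot wdot ⊆ OSet N Bm vdot wdot,
      ∀ res : (↥(OSet N Bm vdot wdot) → ℂ) → (↥(NvwSet N Bm vdot wdot) → ℂ),
        (res = fun f y => f ⟨(y : G), hsub y.2⟩) →
        (∀ f g, res (f + g) = res f + res g) ∧
        (∀ f g, res (f * g) = res f * res g) ∧
        Set.BijOn res
          {f : ↥(OSet N Bm vdot wdot) → ℂ |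
            ∀ n₁ ∈ NvSet N Nm vdot, ∀ y : ↥(OSet N Bm vdot wdot), ∀ n₂ ∈ Nv'Set N wdot,
              ∀ h : n₁ * (y : G) * n₂ ∈ OSet N Bm vdot wdot,
                f ⟨n₁ * (y : G) * n₂, h⟩ = f y}
          Set.univ := by
  refine ⟨nvwSet_subset_oSet hBruhat, fun res hres => ?_⟩
  subst hres
  exact ⟨fun _ _ => rfl, fun _ _ => rfl,
    bijOn_restrict_doubleCosetInvariants (A := nvSubgroup N Nm vdot) (C := nvSubgroup N N wdot) _
      (injOn_mk_nvwSet hNmBm hBN hBruhat) (surjOn_mk_nvwSet hNmBm hfactv hfactw) ℂ⟩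

/-- the restriction map from the ring of `N(v) × N'(w)`-doubly-invariant
`ℂ`-valued functions on `O_{v,w}` (with pointwise operations) to the ring of all
`ℂ`-valued functions on `N_{v,w}` is a ring isomorphism. -/
theorem stmt9 {G : Type*} [Group G] (Bm B Nm N : Subgroup G)
    (hNmBm : Nm ≤ Bm) (hNB : N ≤ B) (vdot wdot : G)
    (hBN : ∀ x : G, x ∈ Bm → x ∈ N → x = 1)
    (hv : ∀ x ∈ N, vdot * x * vdot⁻¹ ∈ Bm → vdot * x * vdot⁻¹ ∈ Nm)
    (hfactv : ∀ x ∈ N, ∃ a ∈ NvSet N Nm vdot, ∃ b ∈ Nv'Set N vdot, x = a * b)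
    (hdisjv : ∀ x : G, x ∈ NvSet N Nm vdot → x ∈ Nv'Set N vdot → x = 1)
    (hfactw : ∀ x ∈ N, ∃ a ∈ NvSet N Nm wdot⁻¹, ∃ b ∈ Nv'Set N wdot⁻¹, x = a * b)
    (hdisjw : ∀ x : G, x ∈ NvSet N Nm wdot⁻¹ → x ∈ Nv'Set N wdot⁻¹ → x = 1)
    (hBruhat : {x : G | ∃ b₁ ∈ Bm, ∃ b₂ ∈ Bm, x = b₁ * wdot * b₂}
        ⊆ {x : G | ∃ b ∈ Bm, ∃ m, (m ∈ Nm ∧ wdot * m * wdot⁻¹ ∈ N) ∧ x = b * wdot * m}) :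
    ∃ hsub : NvwSet N Bm vdot wdot ⊆ OSet N Bm vdot wdot,
      ∀ res : (↥(OSet N Bm vdot wdot) → ℂ) → (↥(NvwSet N Bm vdot wdot) → ℂ),
        (res = fun f y => f ⟨(y : G), hsub y.2⟩) →
        (∀ f g, res (f + g) = res f + res g) ∧
        (∀ f g, res (f * g) = res f * res g) ∧
        Set.BijOn res
          {f : ↥(OSet N Bm vdot wdot) → ℂ |
            ∀ n₁ ∈ NvSet N Nm vdot, ∀ y : ↥(OSet N Bm vdot wdot), ∀ n₂ ∈ Nv'Set N wdot,
              ∀ h : n₁ * (y : G) * n₂ ∈ OSet N Bm vdot wdot,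
                f ⟨n₁ * (y : G) * n₂, h⟩ = f y}
          Set.univ :=
  stmt9_general Bm Nm N hNmBm vdot wdot hBN hfactv hfactw hBruhat
end
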